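/- arXiv:1101.2966 — 8 statements merged into one kernel-verified Lean document; each statement's English description precedes it below -/
import Mathlib

section
/- Let ω ∈ ℂ \ (−∞, 0], let √ω denote the principal square root, and let f : ℝ → ℂ be a Schwartz function. Define v(x) = (1/(2√ω)) ∫_ℝ e^{−√ω·|x−y|} f(y) dy. Then v is twice continuously differentiable on ℝ and satisfies v''(x) − ω·v(x) = −f(x) for all x ∈ ℝ. -/
open MeasureTheory Real Complex

/-! Writing `s = √ω` and splitting the integral at `y = x`, `2 s v = A + B` with
`A x = e^{-s x} ∫_{-∞}^x e^{s y} f y dy` and `B x = e^{s x} ∫_x^∞ e^{-s y} f y dy`.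
By the fundamental theorem of calculus `A' = -s A + f` and `B' = s B - f`, hence
`v' = (B - A) / 2` and `v'' = s (A + B) / 2 - f = s² v - f`. -/

open Set

section TailIntegrals

variable {E : Type*} [NormedAddCommGroup E] [NormedSpace ℝ E] [CompleteSpace E] {g : ℝ → E}

theorem hasDerivAt_integral_Iic (hg : Continuous g) (hint : ∀ x, IntegrableOn g (Iic x))
    (x : ℝ) : HasDerivAt (fun u => ∫ y in Iic u, g y) (g x) x := by
  have h : (fun u => ∫ y in Iic u, g y) = fun u => (∫ y in Iic 0, g y) + ∫ y in (0 : ℝ)..u, g y :=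
    funext fun u => by rw [← intervalIntegral.integral_Iic_sub_Iic (hint 0) (hint u)]; abel
  rw [h]
  exact (hg.integral_hasStrictDerivAt 0 x).hasDerivAt.const_add _

theorem hasDerivAt_integral_Ici (hg : Continuous g) (hint : ∀ x, IntegrableOn g (Ici x))
    (x : ℝ) : HasDerivAt (fun u => ∫ y in Ici u, g y) (-g x) x := by
  have h : (fun u => ∫ y in Ici u, g y) = fun u => (∫ y in Ici 0, g y) - ∫ y in (0 : ℝ)..u, g y :=
    funext fun u => by rw [← intervalIntegral.integral_Ici_sub_Ici' (hint 0) (hint u)]; abel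
  rw [h]
  exact (hg.integral_hasStrictDerivAt 0 x).hasDerivAt.const_sub _

end TailIntegrals

theorem contDiff_two_of_hasDerivAt {E : Type*} [NormedAddCommGroup E] [NormedSpace ℝ E]
    {v w u : ℝ → E} (hv : ∀ x, HasDerivAt v (w x) x) (hw : ∀ x, HasDerivAt w (u x) x)
    (hu : Continuous u) : ContDiff ℝ 2 v := by
  rw [show (2 : WithTop ℕ∞) = 1 + 1 from rfl, contDiff_succ_iff_deriv]
  refine ⟨fun x => (hv x).differentiableAt, by simp, ?_⟩
  rw [funext fun x => (hv x).deriv, contDiff_one_iff_deriv, funext fun x => (hw x).deriv]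
  exact ⟨fun x => (hw x).differentiableAt, hu⟩

section ExpKernel

variable {s : ℂ} {f : ℝ → ℂ}

theorem integrableOn_cexp_mul_mul (hf : Integrable f) (c : ℂ) {S : Set ℝ} (hS : MeasurableSet S)
    {M : ℝ} (hM : ∀ y ∈ S, c.re * y ≤ M) :
    IntegrableOn (fun y : ℝ => cexp (c * y) * f y) S := by
  refine hf.integrableOn.bdd_mul (c := Real.exp M) (by fun_prop) ?_
  refine ae_restrict_of_forall_mem hS fun y hy => ?_
  rw [norm_exp, re_mul_ofReal]
  exact Real.exp_le_exp.mpr (hM y hy)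

theorem integrable_cexp_neg_mul_abs_sub_mul (hs : 0 ≤ s.re) (hf : Integrable f) (x : ℝ) :
    Integrable fun y : ℝ => cexp (-s * |x - y|) * f y := by
  refine hf.bdd_mul (c := 1) (by fun_prop) (ae_of_all _ fun y => ?_)
  rw [norm_exp, re_mul_ofReal, neg_re, Real.exp_le_one_iff, neg_mul, neg_nonpos]
  exact mul_nonneg hs (abs_nonneg _)

noncomputable def expConvIic (s : ℂ) (f : ℝ → ℂ) (x : ℝ) : ℂ :=
  cexp (-s * x) * ∫ y in Iic x, cexp (s * y) * f y

noncomputable def expConvIci (s : ℂ) (f : ℝ → ℂ) (x : ℝ) : ℂ :=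
  cexp (s * x) * ∫ y in Ici x, cexp (-s * y) * f y

theorem integral_cexp_neg_mul_abs_sub_mul (hs : 0 ≤ s.re) (hf : Integrable f) (x : ℝ) :
    ∫ y, cexp (-s * |x - y|) * f y = expConvIic s f x + expConvIci s f x := by
  have hint := integrable_cexp_neg_mul_abs_sub_mul hs hf x
  rw [← intervalIntegral.integral_Iic_add_Ioi hint.integrableOn hint.integrableOn, ← integral_Ici_eq_integral_Ioi,
    expConvIic, expConvIci, ← integral_const_mul, ← integral_const_mul]
  congr 1
  · refine setIntegral_congr_fun measurableSet_Iic fun y (hy : y ≤ x) => ?_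
    rw [abs_of_nonneg (sub_nonneg.mpr hy), ← mul_assoc, ← Complex.exp_add]
    congr 2
    push_cast
    ring
  · refine setIntegral_congr_fun measurableSet_Ici fun y (hy : x ≤ y) => ?_
    rw [abs_sub_comm, abs_of_nonneg (sub_nonneg.mpr hy), ← mul_assoc, ← Complex.exp_add]
    congr 2
    push_cast
    ring

theorem hasDerivAt_cexp_neg_mul_mul {F : ℝ → ℂ} {c φ : ℂ} {x : ℝ}
    (hF : HasDerivAt F (cexp (c * x) * φ) x) :
    HasDerivAt (fun u : ℝ => cexp (-c * u) * F u) (-c * (cexp (-c * x) * F x) + φ) x := by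
  have hexp : HasDerivAt (fun u : ℝ => cexp (-c * u)) (cexp (-c * x) * -c) x := by
    simpa using ((hasDerivAt_id (x : ℂ)).const_mul (-c)).cexp.comp_ofReal
  refine (hexp.mul hF).congr_deriv ?_
  rw [← mul_assoc, ← Complex.exp_add, neg_mul, neg_add_cancel, Complex.exp_zero]
  ring

theorem hasDerivAt_expConvIic (hs : 0 ≤ s.re) (hfc : Continuous f) (hf : Integrable f) (x : ℝ) :
    HasDerivAt (expConvIic s f) (-s * expConvIic s f x + f x) x := by
  refine hasDerivAt_cexp_neg_mul_mul (hasDerivAt_integral_Iic (by fun_prop) (fun a => ?_) x)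
  exact integrableOn_cexp_mul_mul hf s measurableSet_Iic fun y (hy : y ≤ a) =>
    mul_le_mul_of_nonneg_left hy hs

theorem hasDerivAt_expConvIci (hs : 0 ≤ s.re) (hfc : Continuous f) (hf : Integrable f) (x : ℝ) :
    HasDerivAt (expConvIci s f) (s * expConvIci s f x - f x) x := by
  have hint : ∀ a, IntegrableOn (fun y : ℝ => cexp (-s * y) * f y) (Ici a) := fun a =>
    integrableOn_cexp_mul_mul hf (-s) measurableSet_Ici (M := -(s.re * a))
      fun y (hy : a ≤ y) => by
      rw [neg_re, neg_mul, neg_le_neg_iff]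
      exact mul_le_mul_of_nonneg_left hy hs
  have hF := hasDerivAt_integral_Ici (by fun_prop) hint x
  rw [← mul_neg] at hF
  have h := hasDerivAt_cexp_neg_mul_mul hF
  simp only [neg_neg, ← sub_eq_add_neg] at h
  exact h

theorem hasDerivAt_expConvIic_add_expConvIci (hs : 0 ≤ s.re) (hfc : Continuous f)
    (hf : Integrable f) (x : ℝ) :
    HasDerivAt (fun x => expConvIic s f x + expConvIci s f x)
      (s * (expConvIci s f x - expConvIic s f x)) x := by
  exact ((hasDerivAt_expConvIic hs hfc hf x).add (hasDerivAt_expConvIci hs hfc hf x)).congr_deriv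
    (by ring)

theorem hasDerivAt_expConvIci_sub_expConvIic (hs : 0 ≤ s.re) (hfc : Continuous f)
    (hf : Integrable f) (x : ℝ) :
    HasDerivAt (fun x => expConvIci s f x - expConvIic s f x)
      (s * (expConvIic s f x + expConvIci s f x) - 2 * f x) x := by
  exact ((hasDerivAt_expConvIci hs hfc hf x).sub (hasDerivAt_expConvIic hs hfc hf x)).congr_deriv
    (by ring)

end ExpKernel

/-- For `ω ∈ ℂ \ (−∞,0]` (principal square root `√ω = ω^(1/2)`)
and a Schwartz function `f`, the convolution
`v(x) = (1/(2√ω)) ∫_ℝ e^{−√ω |x−y|} f(y) dy`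
is twice continuously differentiable and satisfies `v'' − ω v = −f` on `ℝ`. -/
theorem convolution_solves_second_order_ode
    (ω : ℂ) (hω : ¬(ω.im = 0 ∧ ω.re ≤ 0)) (f : SchwartzMap ℝ ℂ)
    (v : ℝ → ℂ)
    (hv : ∀ x : ℝ, v x =
      (1 / (2 * ω ^ (1/2 : ℂ))) *
        ∫ y : ℝ, Complex.exp (-(ω ^ (1/2 : ℂ)) * |x - y|) * f y) :
    ContDiff ℝ 2 v ∧ ∀ x : ℝ, deriv (deriv v) x - ω * v x = -f x := by
  have hω0 : ω ≠ 0 := by rintro rfl; exact hω ⟨rfl, le_rfl⟩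
  set s := ω ^ (1/2 : ℂ) with hs_def
  have hs : 0 ≤ s.re := by rw [hs_def, one_div, cpow_inv_two_re]; positivity
  have hs0 : s ≠ 0 := by simp [hs_def, hω0]
  have hsq : s * s = ω := by rw [← sq, hs_def, one_div, cpow_ofNat_inv_pow]
  have hsum := hasDerivAt_expConvIic_add_expConvIci hs f.continuous f.integrable
  have hdiff := hasDerivAt_expConvIci_sub_expConvIic hs f.continuous f.integrable
  set A := expConvIic s f
  set B := expConvIci s f
  have hvAB : v = fun x => (A x + B x) / (2 * s) := funext fun x => by
    rw [hv, integral_cexp_neg_mul_abs_sub_mul hs f.integrable]; ring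
  have hv' : ∀ x, HasDerivAt v ((B x - A x) / 2) x := fun x => by
    rw [hvAB]
    refine ((hsum x).div_const (2 * s)).congr_deriv ?_
    field_simp
  have hv'' : ∀ x, HasDerivAt (fun x => (B x - A x) / 2) (ω * v x - f x) x := fun x => by
    refine ((hdiff x).div_const 2).congr_deriv ?_
    rw [hvAB, ← hsq]
    field_simp
  have hv_cont : Continuous v := continuous_iff_continuousAt.2 fun x => (hv' x).continuousAt
  refine ⟨contDiff_two_of_hasDerivAt hv' hv'' (by fun_prop), fun x => ?_⟩
  rw [funext fun x => (hv' x).deriv, (hv'' x).deriv]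
  ring
end

section
/- Let 0 ≤ α < 1 and 0 < τ < 1. Then for every complex s with Re s > 0, the number ω(s) = s²(1 + τs^α)/(1 + s^α) is well defined (the denominator is nonzero) and ω(s) ∈ ℂ \ (−∞, 0], i.e. ω(s) is not a nonpositive real number. -/
/-!
Write `z = s ^ α` and `θ = arg s`. Then `ω = τ s² + (1 - τ) s² / (1 + z)`, and for `Im s > 0` both
terms lie in the open upper half-plane: `arg s² = 2θ ∈ (0, π)`, while `s² / (1 + z)` is a positive
multiple of `s² + s² z̄`, whose second summand has argument `(2 - α) θ ∈ (0, π)`. Conjugation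
symmetry handles `Im s < 0`, and for real `s > 0` the value `ω(s)` is a positive real.
-/

open Real Complex ComplexConjugate

noncomputable def zenerOmega (α τ : ℝ) (s : ℂ) : ℂ :=
  s ^ 2 * (1 + (τ : ℂ) * s ^ (α : ℂ)) / (1 + s ^ (α : ℂ))

section

variable {s : ℂ} {α τ : ℝ}

theorem im_sq_pos (hre : 0 < s.re) (him : 0 < s.im) : 0 < (s ^ 2).im := by
  rw [pow_two, mul_im]
  nlinarith

theorem re_cpow_ofReal_pos (hs : 0 < s.re) (hα : |α| ≤ 1) : 0 < (s ^ (α : ℂ)).re := by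
  have hs0 : s ≠ 0 := fun h => by simp [h] at hs
  have harg : |arg s| < π / 2 := abs_arg_lt_pi_div_two_iff.2 (Or.inl hs)
  have hargα : |arg s * α| < π / 2 := by
    rw [abs_mul]
    nlinarith [abs_nonneg (arg s)]
  rw [cpow_ofReal_re]
  exact mul_pos (Real.rpow_pos_of_pos (norm_pos_iff.2 hs0) _)
    (Real.cos_pos_of_mem_Ioo (abs_lt.1 hargα))

theorem one_add_cpow_ofReal_ne_zero (hs : 0 < s.re) (hα : |α| ≤ 1) : 1 + s ^ (α : ℂ) ≠ 0 := by
  intro h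
  have h_re := congrArg re h
  simp only [add_re, one_re, zero_re] at h_re
  linarith [re_cpow_ofReal_pos hs hα]

theorem zenerOmega_eq_add (h : 1 + s ^ (α : ℂ) ≠ 0) :
    zenerOmega α τ s = τ * s ^ 2 + (1 - τ) * (s ^ 2 / (1 + s ^ (α : ℂ))) := by
  unfold zenerOmega
  field_simp
  ring

theorem im_sq_mul_conj_cpow_ofReal_pos (hre : 0 < s.re) (him : 0 < s.im) (hα0 : 0 ≤ α)
    (hα2 : α < 2) : 0 < (s ^ 2 * conj (s ^ (α : ℂ))).im := by
  set θ := arg s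
  have hθ0 : 0 < θ :=
    (arg_nonneg_iff.2 him.le).lt_of_ne fun h => him.ne' (arg_eq_zero_iff.1 h.symm).2
  have hθ : θ < π / 2 := (abs_lt.1 (abs_arg_lt_pi_div_two_iff.2 (Or.inl hre))).2
  have hs0 : s ≠ 0 := fun h => by simp [h] at hre
  have h_polar : (s ^ 2 * conj (s ^ (α : ℂ))).im
      = ‖s‖ ^ 2 * ‖s‖ ^ α * Real.sin ((2 - α) * θ) := by
    simp only [pow_two, mul_im, mul_re, conj_re, conj_im, cpow_ofReal_re, cpow_ofReal_im]
    rw [← norm_mul_cos_arg s, ← norm_mul_sin_arg s, show (2 - α) * θ = 2 * θ - θ * α by ring,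
      Real.sin_sub, Real.sin_two_mul, Real.cos_two_mul]
    linear_combination ‖s‖ ^ 2 * ‖s‖ ^ α * Real.sin (θ * α) * Real.sin_sq_add_cos_sq θ
  rw [h_polar]
  have hsin : 0 < Real.sin ((2 - α) * θ) :=
    Real.sin_pos_of_pos_of_lt_pi (by nlinarith) (by nlinarith [Real.pi_pos])
  have hnorm : 0 < ‖s‖ := norm_pos_iff.2 hs0
  positivity

theorem im_sq_div_one_add_cpow_ofReal_pos (hre : 0 < s.re) (him : 0 < s.im) (hα0 : 0 ≤ α)
    (hα1 : α ≤ 1) : 0 < (s ^ 2 / (1 + s ^ (α : ℂ))).im := by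
  have hden : 1 + s ^ (α : ℂ) ≠ 0 :=
    one_add_cpow_ofReal_ne_zero hre (abs_le.2 ⟨by linarith, hα1⟩)
  have h_num : (s ^ 2).im * (1 + s ^ (α : ℂ)).re - (s ^ 2).re * (1 + s ^ (α : ℂ)).im
      = (s ^ 2).im + (s ^ 2 * conj (s ^ (α : ℂ))).im := by
    simp only [add_re, add_im, one_re, one_im, mul_im, conj_re, conj_im]
    ring
  rw [div_im, ← sub_div, h_num]
  exact div_pos (add_pos (im_sq_pos hre him) (im_sq_mul_conj_cpow_ofReal_pos hre him hα0 (by linarith)))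
    (normSq_pos.2 hden)

theorem im_zenerOmega_pos (hre : 0 < s.re) (him : 0 < s.im) (hα0 : 0 ≤ α) (hα1 : α ≤ 1)
    (hτ0 : 0 ≤ τ) (hτ1 : τ ≤ 1) : 0 < (zenerOmega α τ s).im := by
  have h_quot := im_sq_div_one_add_cpow_ofReal_pos hre him hα0 hα1
  rw [zenerOmega_eq_add (one_add_cpow_ofReal_ne_zero hre (abs_le.2 ⟨by linarith, hα1⟩))]
  simpa using convex_Ioi (0 : ℝ) (im_sq_pos hre him) h_quot hτ0 (sub_nonneg.2 hτ1) (add_sub_cancel τ 1)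

theorem zenerOmega_conj (hs : arg s ≠ π) : zenerOmega α τ (conj s) = conj (zenerOmega α τ s) := by
  simp [zenerOmega, conj_cpow s _ hs]

theorem im_zenerOmega_neg (hre : 0 < s.re) (him : s.im < 0) (hα0 : 0 ≤ α) (hα1 : α ≤ 1)
    (hτ0 : 0 ≤ τ) (hτ1 : τ ≤ 1) : (zenerOmega α τ s).im < 0 := by
  have h := im_zenerOmega_pos (s := conj s) (by simpa) (by simpa) hα0 hα1 hτ0 hτ1
  rw [zenerOmega_conj (arg_lt_pi_iff.2 (Or.inl hre.le)).ne] at h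
  simpa using h

theorem zenerOmega_ofReal {r : ℝ} (hr : 0 ≤ r) :
    zenerOmega α τ r = ((r ^ 2 * (1 + τ * r ^ α) / (1 + r ^ α) : ℝ) : ℂ) := by
  rw [zenerOmega, ← ofReal_cpow hr]
  push_cast
  rfl

end

/-- For `0 ≤ α < 1`, `0 < τ < 1` and every `s` with `Re s > 0`,
the denominator `1 + s^α` is nonzero and
`ω(s) = s²(1+τs^α)/(1+s^α)` is not a nonpositive real number
(`s^α` the principal branch). -/
theorem omega_avoids_nonpositive_reals
    (α τ : ℝ) (hα0 : 0 ≤ α) (hα1 : α < 1) (hτ0 : 0 < τ) (hτ1 : τ < 1)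
    (s : ℂ) (hs : 0 < s.re) :
    1 + s ^ (α : ℂ) ≠ 0 ∧
    ¬((s ^ 2 * (1 + (τ : ℂ) * s ^ (α : ℂ)) / (1 + s ^ (α : ℂ))).im = 0 ∧
      (s ^ 2 * (1 + (τ : ℂ) * s ^ (α : ℂ)) / (1 + s ^ (α : ℂ))).re ≤ 0) := by
  refine ⟨one_add_cpow_ofReal_ne_zero hs (abs_le.2 ⟨by linarith, hα1.le⟩), ?_⟩
  change ¬((zenerOmega α τ s).im = 0 ∧ (zenerOmega α τ s).re ≤ 0)
  rintro ⟨him, hre⟩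
  rcases lt_trichotomy s.im 0 with hneg | hzero | hpos
  · exact (im_zenerOmega_neg hs hneg hα0 hα1.le hτ0.le hτ1.le).ne him
  · have hs_real : s = (s.re : ℂ) := ext rfl (by simpa using hzero)
    rw [hs_real, zenerOmega_ofReal hs.le, ofReal_re] at hre
    have h_pos : 0 < s.re ^ 2 * (1 + τ * s.re ^ α) / (1 + s.re ^ α) := by positivity
    linarith
  · exact (im_zenerOmega_pos hs hpos hα0 hα1.le hτ0.le hτ1.le).ne' him
end

section
/- Let 0 < α < 1 and 0 < τ < 1. Then for every s ∈ ℂ \ (−∞, 0], the quotient (1 + τ·s^α)/(1 + s^α) lies in ℂ \ (−∞, 0], i.e. it is never zero and never a negative real number. -/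
open Real Complex

lemma cpow_avoids_nonpos (α : ℝ) (hα0 : 0 < α) (hα1 : α < 1)
    (s : ℂ) (hs : ¬(s.im = 0 ∧ s.re ≤ 0)) :
    ¬((s ^ (α : ℂ)).im = 0 ∧ (s ^ (α : ℂ)).re ≤ 0) := by
  have hs0 : s ≠ 0 := by
    rintro rfl; exact hs ⟨rfl, le_refl 0⟩
  have harg_ne : Complex.arg s ≠ π := by
    intro h
    rcases Complex.arg_eq_pi_iff.mp h with ⟨h1, h2⟩
    exact hs ⟨h2, le_of_lt h1⟩
  have harg_lt : Complex.arg s < π := lt_of_le_of_ne (Complex.arg_le_pi s) harg_ne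
  have harg_gt : -π < Complex.arg s := Complex.neg_pi_lt_arg s
  set θ : ℝ := α * Complex.arg s with hθ
  have hπ : (0:ℝ) < π := Real.pi_pos
  have hθlt : θ < π := by nlinarith
  have hθgt : -π < θ := by nlinarith
  have hcpow : s ^ (α : ℂ) = Complex.exp (Complex.log s * (α : ℂ)) :=
    Complex.cpow_def_of_ne_zero hs0 _
  have him : (Complex.log s * (α : ℂ)).im = θ := by
    simp [Complex.mul_im, Complex.log_im, hθ, mul_comm]
  rintro ⟨h1, h2⟩
  rw [hcpow, Complex.exp_im, him] at h1
  rw [hcpow, Complex.exp_re, him] at h2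
  have hexp : (0:ℝ) < Real.exp (Complex.log s * (α : ℂ)).re := Real.exp_pos _
  have hsin : Real.sin θ = 0 := by
    rcases mul_eq_zero.mp h1 with h | h
    · exact absurd h (ne_of_gt hexp)
    · exact h
  have hθ0 : θ = 0 := (Real.sin_eq_zero_iff_of_lt_of_lt hθgt hθlt).mp hsin
  rw [hθ0, Real.cos_zero, mul_one] at h2
  exact absurd h2 (not_le.mpr hexp)

/-- For `0 < α < 1`, `0 < τ < 1` and every `s ∈ ℂ \ (−∞,0]`,
the quotient `(1 + τs^α)/(1 + s^α)` is not a nonpositive real number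
(in particular it is nonzero), where `s^α` is the principal branch. -/
theorem quotient_avoids_nonpositive_reals
    (α τ : ℝ) (hα0 : 0 < α) (hα1 : α < 1) (hτ0 : 0 < τ) (hτ1 : τ < 1)
    (s : ℂ) (hs : ¬(s.im = 0 ∧ s.re ≤ 0)) :
    ¬(((1 + (τ : ℂ) * s ^ (α : ℂ)) / (1 + s ^ (α : ℂ))).im = 0 ∧
      ((1 + (τ : ℂ) * s ^ (α : ℂ)) / (1 + s ^ (α : ℂ))).re ≤ 0) := by
  set w : ℂ := s ^ (α : ℂ) with hw
  have hkey := cpow_avoids_nonpos α hα0 hα1 s hs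
  rw [← hw] at hkey
  have hden : 1 + w ≠ 0 := by
    intro h
    have hw1 : w = -1 := by linear_combination h
    apply hkey
    rw [hw1]; constructor <;> simp
  rintro ⟨h1, h2⟩
  set q : ℂ := (1 + (τ : ℂ) * w) / (1 + w) with hq
  set c : ℝ := q.re with hc
  have hqc : q = (c : ℂ) := by
    apply Complex.ext
    · simp [hc]
    · simp [h1]
  have heq : 1 + (τ : ℂ) * w = (c : ℂ) * (1 + w) := by
    rw [← hqc, hq, div_mul_cancel₀ _ hden]
  have hcτ : (τ : ℂ) - (c : ℂ) ≠ 0 := by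
    rw [sub_ne_zero]
    intro h
    have : τ = c := by exact_mod_cast h
    linarith [h2, this]
  have hwval : w = (((c - 1) / (τ - c) : ℝ) : ℂ) := by
    push_cast
    rw [eq_div_iff hcτ]
    linear_combination heq
  apply hkey
  rw [hwval]
  refine ⟨Complex.ofReal_im _, ?_⟩
  rw [Complex.ofReal_re]
  apply div_nonpos_of_nonpos_of_nonneg
  · linarith
  · linarith
end

section
/- Let 0 < α < 1 and 0 < τ < 1. Then for every s with Re s > 0 one has s·√((1 + τs^α)/(1 + s^α)) = √(s²(1 + τs^α)/(1 + s^α)) (both square roots principal), and in particular Re( s·√((1 + τs^α)/(1 + s^α)) ) > 0. -/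
open Real Complex

/-!
Write `z = s^α` and `q = (1 + τz)/(1 + z)`. Since `|arg z| = α|arg s| ≤ π/2`, `z` lies in the
closed right half-plane, so `Re q > 0` and `w = √q` has `Re w > 0`. Moreover
`Im q = (τ - 1) Im z / |1 + z|²` and `Im z` has the sign of `Im s`, so `Im w` (the sign of `Im q`)
is opposite to `Im s`; hence `Re (s w) = Re s Re w - Im s Im w > 0`. A number with positive real
part is the principal square root of its square, and `(s w)² = s² q`.
-/

namespace Complex

lemma re_cpow_ofReal_nonneg {s : ℂ} (hs : 0 ≤ s.re) {α : ℝ} (hα0 : 0 ≤ α)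
    (hα1 : α ≤ 1) : 0 ≤ (s ^ (α : ℂ)).re := by
  rw [cpow_ofReal_re]
  have harg : |s.arg| ≤ π / 2 := abs_arg_le_pi_div_two_iff.2 hs
  have harg_mul : |s.arg * α| ≤ π / 2 := by
    rw [abs_mul, abs_of_nonneg hα0]
    nlinarith [abs_nonneg s.arg]
  have hcos := Real.cos_nonneg_of_mem_Icc (abs_le.1 harg_mul)
  positivity

lemma im_mul_im_cpow_ofReal_nonneg (s : ℂ) {α : ℝ} (hα0 : 0 ≤ α) (hα1 : α ≤ 1) :
    0 ≤ s.im * (s ^ (α : ℂ)).im := by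
  rw [cpow_ofReal_im]
  have hlt := neg_pi_lt_arg s
  have hle := arg_le_pi s
  rcases le_or_gt 0 s.arg with harg | harg
  · have hsin : 0 ≤ Real.sin (s.arg * α) :=
      Real.sin_nonneg_of_nonneg_of_le_pi (by positivity) (by nlinarith)
    have him : 0 ≤ s.im := arg_nonneg_iff.1 harg
    positivity
  · have hsin : Real.sin (s.arg * α) ≤ 0 :=
      Real.sin_nonpos_of_nonpos_of_neg_pi_le (by nlinarith) (by nlinarith)
    have him : s.im < 0 := arg_neg_iff.1 harg
    have hnorm := Real.rpow_nonneg (norm_nonneg s) α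
    nlinarith [mul_nonpos_of_nonneg_of_nonpos hnorm hsin]

lemma re_one_add_mul_div_one_add_pos {τ : ℝ} (hτ : 0 ≤ τ) {z : ℂ} (hz : 0 ≤ z.re) :
    0 < ((1 + τ * z) / (1 + z)).re := by
  have hden : 0 < normSq (1 + z) := normSq_pos.2 fun h => by
    have h_re := congrArg re h
    simp only [add_re, one_re, zero_re] at h_re
    linarith
  rw [div_re, ← add_div]
  refine div_pos ?_ hden
  simp only [add_re, add_im, one_re, one_im, re_ofReal_mul, im_ofReal_mul]
  nlinarith [mul_nonneg hτ hz, mul_nonneg (mul_nonneg hτ hz) hz, mul_nonneg hτ (sq_nonneg z.im)]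

lemma im_one_add_mul_div_one_add (τ : ℝ) (z : ℂ) :
    ((1 + τ * z) / (1 + z)).im = (τ - 1) * z.im / normSq (1 + z) := by
  simp only [div_im, add_re, add_im, one_re, one_im, re_ofReal_mul, im_ofReal_mul]
  ring

lemma re_cpow_inv_two_pos {q : ℂ} (hq : 0 < q.re) : 0 < (q ^ (2⁻¹ : ℂ)).re := by
  rw [cpow_inv_two_re]
  exact Real.sqrt_pos.2 (by linarith [re_le_norm q])

lemma im_eq_two_mul_re_mul_im_cpow_inv_two (q : ℂ) :
    q.im = 2 * (q ^ (2⁻¹ : ℂ)).re * (q ^ (2⁻¹ : ℂ)).im := by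
  conv_lhs => rw [← cpow_ofNat_inv_pow q 2]
  rw [sq, mul_im]
  ring

lemma im_mul_im_cpow_inv_two_nonpos {s z : ℂ} (hsz : 0 ≤ s.im * z.im) (hz : 0 ≤ z.re)
    {τ : ℝ} (hτ0 : 0 ≤ τ) (hτ1 : τ ≤ 1) :
    s.im * (((1 + τ * z) / (1 + z)) ^ (2⁻¹ : ℂ)).im ≤ 0 := by
  set q := (1 + τ * z) / (1 + z)
  have hw : 0 < (q ^ (2⁻¹ : ℂ)).re :=
    re_cpow_inv_two_pos (re_one_add_mul_div_one_add_pos hτ0 hz)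
  have hprod : s.im * (q ^ (2⁻¹ : ℂ)).im * (2 * (q ^ (2⁻¹ : ℂ)).re)
      = (τ - 1) * (s.im * z.im) / normSq (1 + z) := by
    have hq_im : q.im = (τ - 1) * z.im / normSq (1 + z) := im_one_add_mul_div_one_add τ z
    calc s.im * (q ^ (2⁻¹ : ℂ)).im * (2 * (q ^ (2⁻¹ : ℂ)).re) = s.im * q.im := by
          rw [im_eq_two_mul_re_mul_im_cpow_inv_two q]; ring
      _ = (τ - 1) * (s.im * z.im) / normSq (1 + z) := by rw [hq_im]; ring
  have hrhs : (τ - 1) * (s.im * z.im) / normSq (1 + z) ≤ 0 :=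
    div_nonpos_of_nonpos_of_nonneg (mul_nonpos_of_nonpos_of_nonneg (by linarith) hsz)
      (normSq_nonneg _)
  exact nonpos_of_mul_nonpos_left (hprod ▸ hrhs) (by positivity)

end Complex

/-- For `0 < α < 1`, `0 < τ < 1` and `Re s > 0`,
`s·√((1+τs^α)/(1+s^α)) = √(s²(1+τs^α)/(1+s^α))` (principal square roots),
and in particular the left-hand side has positive real part. -/
theorem sqrt_omega_eq_s_mul_sqrt_quotient
    (α τ : ℝ) (hα0 : 0 < α) (hα1 : α < 1) (hτ0 : 0 < τ) (hτ1 : τ < 1)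
    (s : ℂ) (hs : 0 < s.re) :
    s * (((1 + (τ : ℂ) * s ^ (α : ℂ)) / (1 + s ^ (α : ℂ))) ^ (1/2 : ℂ))
      = (s ^ 2 * (1 + (τ : ℂ) * s ^ (α : ℂ)) / (1 + s ^ (α : ℂ))) ^ (1/2 : ℂ) ∧
    0 < (s * (((1 + (τ : ℂ) * s ^ (α : ℂ)) / (1 + s ^ (α : ℂ))) ^ (1/2 : ℂ))).re := by
  rw [one_div]
  set z := s ^ (α : ℂ)
  set q := (1 + (τ : ℂ) * z) / (1 + z) with hq
  have hz_re : 0 ≤ z.re := re_cpow_ofReal_nonneg hs.le hα0.le hα1.le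
  have hw_re : 0 < (q ^ (2⁻¹ : ℂ)).re :=
    re_cpow_inv_two_pos (re_one_add_mul_div_one_add_pos hτ0.le hz_re)
  have hw_im : s.im * (q ^ (2⁻¹ : ℂ)).im ≤ 0 :=
    im_mul_im_cpow_inv_two_nonpos (im_mul_im_cpow_ofReal_nonneg s hα0.le hα1.le) hz_re
      hτ0.le hτ1.le
  have hre : 0 < (s * q ^ (2⁻¹ : ℂ)).re := by
    rw [mul_re]
    nlinarith [mul_pos hs hw_re]
  have hsq : (s * q ^ (2⁻¹ : ℂ)) ^ 2 = s ^ 2 * q := by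
    rw [mul_pow, cpow_ofNat_inv_pow]
  refine ⟨?_, hre⟩
  rw [mul_div_assoc, ← hq, ← hsq, sq_cpow_two_inv hre]
end

section
/- Let 0 < α < 1 and 0 < τ < 1, and fix x ∈ ℝ. Then the function S̃(x, ·) : s ↦ (1/(2s))·√((1 + τs^α)/(1 + s^α))·exp( −|x|·s·√((1 + τs^α)/(1 + s^α)) ) is holomorphic (complex differentiable) on ℂ \ ((−∞, 0] ∪ {0}), in particular on the open right half-plane {Re s > 0}. -/
open Real Complex

lemma cpow_mem_slitPlane_aux {α : ℝ} (hα0 : 0 < α) (hα1 : α < 1)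
    {s : ℂ} (hs : s ∈ Complex.slitPlane) : s ^ (α : ℂ) ∈ Complex.slitPlane := by
  have hs0 : s ≠ 0 := Complex.slitPlane_ne_zero hs
  rw [Complex.cpow_def_of_ne_zero hs0]
  rcases eq_or_ne s.arg 0 with h0 | h0
  · -- s is a positive real
    have hre : 0 ≤ s.re ∧ s.im = 0 := Complex.arg_eq_zero_iff.mp h0
    have him : (Complex.log s * (α : ℂ)).im = 0 := by
      simp [Complex.mul_im, Complex.log_im, h0]
    have hre' : Real.exp ((Complex.log s * (α : ℂ)).re) > 0 := Real.exp_pos _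
    left
    rw [Complex.exp_re] at *
    simpa [Complex.exp_re, him] using hre'
  · right
    rw [Complex.exp_im]
    have him : (Complex.log s * (α : ℂ)).im = s.arg * α := by
      simp [Complex.mul_im, Complex.log_im]
    rw [him]
    have h1 : -π < s.arg * α := by
      nlinarith [Complex.neg_pi_lt_arg s, Complex.arg_le_pi s, Real.pi_pos]
    have h2 : s.arg * α < π := by
      nlinarith [Complex.neg_pi_lt_arg s, Complex.arg_le_pi s, Real.pi_pos]
    have hsin : Real.sin (s.arg * α) ≠ 0 := by
      rw [Ne, Real.sin_eq_zero_iff_of_lt_of_lt h1 h2]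
      exact mul_ne_zero h0 (ne_of_gt hα0)
    exact mul_ne_zero (ne_of_gt (Real.exp_pos _)) hsin

lemma ratio_mem_slitPlane_aux {τ : ℝ} (hτ0 : 0 < τ) (hτ1 : τ < 1)
    {z : ℂ} (hz : z ∈ Complex.slitPlane) :
    (1 + z ≠ 0) ∧ (1 + (τ : ℂ) * z) / (1 + z) ∈ Complex.slitPlane := by
  have h1 : (1 : ℂ) + z ≠ 0 := by
    intro h
    have : z = -1 := by linear_combination h
    rw [Complex.mem_slitPlane_iff, this] at hz
    simp at hz
    norm_num at hz
  refine ⟨h1, ?_⟩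
  by_contra hw
  set w : ℂ := (1 + (τ : ℂ) * z) / (1 + z) with hwdef
  rw [Complex.mem_slitPlane_iff] at hw
  push_neg at hw
  obtain ⟨hwre, hwim⟩ := hw
  have hwr : w = (w.re : ℂ) := Complex.ext rfl (by simp [hwim])
  have key : w * (1 + z) = 1 + (τ : ℂ) * z := by
    rw [hwdef]; field_simp
  have hne : w - (τ : ℂ) ≠ 0 := by
    intro h
    have h2 : w.re - τ = 0 := by
      have := congrArg Complex.re h
      simpa using this
    linarith
  have hzeq : z = (1 - w) / (w - (τ : ℂ)) := by
    rw [eq_div_iff hne]; linear_combination key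
  have hzeq' : z = (((1 - w.re) / (w.re - τ) : ℝ) : ℂ) := by
    rw [hzeq, hwr]; push_cast; rfl
  have hval : (1 - w.re) / (w.re - τ) < 0 := by
    apply div_neg_of_pos_of_neg <;> linarith
  rw [Complex.mem_slitPlane_iff, hzeq'] at hz
  simp only [Complex.ofReal_re, Complex.ofReal_im] at hz
  rcases hz with h | h
  · linarith
  · exact h rfl

/-- For `0 < α < 1`, `0 < τ < 1` and fixed `x ∈ ℝ`, the function
`S̃(x,·) : s ↦ (1/(2s))·√((1+τs^α)/(1+s^α))·exp(−|x|·s·√((1+τs^α)/(1+s^α)))`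
is holomorphic on `ℂ \ ((−∞,0] ∪ {0}) = ℂ \ (−∞,0]`, in particular on the open
right half-plane `{Re s > 0}` (`s^α` principal branch, `√` principal root). -/
theorem laplace_transform_fund_sol_holomorphic
    (α τ : ℝ) (hα0 : 0 < α) (hα1 : α < 1) (hτ0 : 0 < τ) (hτ1 : τ < 1) (x : ℝ) :
    DifferentiableOn ℂ
      (fun s : ℂ => (1 / (2 * s)) *
        (((1 + (τ : ℂ) * s ^ (α : ℂ)) / (1 + s ^ (α : ℂ))) ^ (1/2 : ℂ)) *
        Complex.exp (-((|x| : ℝ) : ℂ) * s *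
          (((1 + (τ : ℂ) * s ^ (α : ℂ)) / (1 + s ^ (α : ℂ))) ^ (1/2 : ℂ))))
      {s : ℂ | ¬(s.im = 0 ∧ s.re ≤ 0)} ∧
    DifferentiableOn ℂ
      (fun s : ℂ => (1 / (2 * s)) *
        (((1 + (τ : ℂ) * s ^ (α : ℂ)) / (1 + s ^ (α : ℂ))) ^ (1/2 : ℂ)) *
        Complex.exp (-((|x| : ℝ) : ℂ) * s *
          (((1 + (τ : ℂ) * s ^ (α : ℂ)) / (1 + s ^ (α : ℂ))) ^ (1/2 : ℂ))))
      {s : ℂ | 0 < s.re} := by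
  have main : DifferentiableOn ℂ
      (fun s : ℂ => (1 / (2 * s)) *
        (((1 + (τ : ℂ) * s ^ (α : ℂ)) / (1 + s ^ (α : ℂ))) ^ (1/2 : ℂ)) *
        Complex.exp (-((|x| : ℝ) : ℂ) * s *
          (((1 + (τ : ℂ) * s ^ (α : ℂ)) / (1 + s ^ (α : ℂ))) ^ (1/2 : ℂ))))
      {s : ℂ | ¬(s.im = 0 ∧ s.re ≤ 0)} := by
    intro s hs
    apply DifferentiableAt.differentiableWithinAt
    have hs' : s ∈ Complex.slitPlane := by
      rw [Complex.mem_slitPlane_iff]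
      simp only [Set.mem_setOf_eq] at hs
      push_neg at hs
      rcases eq_or_ne s.im 0 with h | h
      · exact Or.inl (hs h)
      · exact Or.inr h
    have hs0 : s ≠ 0 := Complex.slitPlane_ne_zero hs'
    have hz : s ^ (α : ℂ) ∈ Complex.slitPlane := cpow_mem_slitPlane_aux hα0 hα1 hs'
    obtain ⟨hden, hratio⟩ := ratio_mem_slitPlane_aux hτ0 hτ1 hz
    have hd1 : DifferentiableAt ℂ (fun s : ℂ => s ^ (α : ℂ)) s :=
      differentiableAt_id.cpow (differentiableAt_const _) hs'
    have hdw : DifferentiableAt ℂ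
        (fun s : ℂ => (1 + (τ : ℂ) * s ^ (α : ℂ)) / (1 + s ^ (α : ℂ))) s :=
      DifferentiableAt.div
        ((differentiableAt_const _).add ((differentiableAt_const _).mul hd1))
        ((differentiableAt_const _).add hd1) hden
    have hsqrt : DifferentiableAt ℂ
        (fun s : ℂ => ((1 + (τ : ℂ) * s ^ (α : ℂ)) / (1 + s ^ (α : ℂ))) ^ (1/2 : ℂ)) s :=
      hdw.cpow (differentiableAt_const _) hratio
    have hinv : DifferentiableAt ℂ (fun s : ℂ => 1 / (2 * s)) s :=
      (differentiableAt_const _).div ((differentiableAt_const _).mul differentiableAt_id)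
        (by simp [hs0])
    have hexp : DifferentiableAt ℂ
        (fun s : ℂ => Complex.exp (-((|x| : ℝ) : ℂ) * s *
          (((1 + (τ : ℂ) * s ^ (α : ℂ)) / (1 + s ^ (α : ℂ))) ^ (1/2 : ℂ)))) s :=
      (((differentiableAt_const _).mul differentiableAt_id).mul hsqrt).cexp
    exact (hinv.mul hsqrt).mul hexp
  refine ⟨main, main.mono ?_⟩
  intro s hs
  simp only [Set.mem_setOf_eq] at *
  intro h
  linarith [h.2]
end

section
/- Let 0 < α < 1 and 0 < τ < 1, and let x ∈ ℝ, t > 0. For ε > 0 and φ ∈ [−π, π] set h(ε, φ) = √( (1 + τ·ε^α·e^{iαφ}) / (1 + ε^α·e^{iαφ}) ). Then lim_{ε → 0⁺} ∫_{−π}^{π} h(ε, φ) · exp( −|x|·ε·e^{iφ}·h(ε, φ) + t·ε·e^{iφ} ) dφ = 2π. -/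
/-!
Writing `w = ε^α e^{iαφ}`, the radicand is `(1 + τ w)/(1 + w) = τ + (1 - τ)/(1 + w)`, which has
positive real part whenever `‖w‖ < 1`. So for `|ε| < 1` the principal square root is taken away
from its branch cut, the integrand is jointly continuous in `(ε, φ)`, and the integral is
continuous in `ε` at `0`, where the integrand is identically `1`.
-/

open Real Complex Filter Set

lemma re_one_add_mul_div_one_add_pos {τ : ℝ} (hτ0 : 0 ≤ τ) (hτ1 : τ ≤ 1) {w : ℂ}
    (hw : ‖w‖ < 1) : 0 < ((1 + τ * w) / (1 + w)).re := by
  have hre : 0 < (1 + w).re := by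
    have := neg_le_of_abs_le (abs_re_le_norm w)
    simp only [add_re, one_re]
    linarith
  have hne : 1 + w ≠ 0 := fun h => by simp [h] at hre
  have hsplit : (1 + τ * w) / (1 + w) = τ + ((1 - τ : ℝ) : ℂ) * (1 + w)⁻¹ := by
    field_simp
    push_cast
    ring
  have hinv : 0 < (1 + w)⁻¹.re := by
    rw [inv_re]
    exact div_pos hre (normSq_pos.2 hne)
  rw [hsplit, add_re, ofReal_re, re_ofReal_mul]
  rcases hτ1.lt_or_eq with hτ | rfl
  · exact add_pos_of_nonneg_of_pos hτ0 (mul_pos (sub_pos.2 hτ) hinv)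
  · simp

lemma continuousOn_cpow_half_ratio {τ : ℝ} (hτ0 : 0 ≤ τ) (hτ1 : τ ≤ 1) :
    ContinuousOn (fun w : ℂ => ((1 + τ * w) / (1 + w)) ^ (1 / 2 : ℂ)) (Metric.ball 0 1) := by
  refine ContinuousOn.cpow_const ?_ fun w hw => Or.inl <|
    re_one_add_mul_div_one_add_pos hτ0 hτ1 (mem_ball_zero_iff.1 hw)
  refine (continuousOn_const.add (continuousOn_const.mul continuousOn_id)).div
    (continuousOn_const.add continuousOn_id) fun w hw h0 => ?_
  have : ‖(-1 : ℂ)‖ < 1 := by simpa [eq_neg_of_add_eq_zero_right h0] using mem_ball_zero_iff.1 hw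
  simp at this

lemma norm_ofReal_rpow_mul_exp_I_mul_lt_one {α ε : ℝ} (hα : 0 < α) (hε : |ε| < 1) (θ : ℝ) :
    ‖((ε ^ α : ℝ) : ℂ) * exp (I * θ)‖ < 1 := by
  rw [norm_mul, mul_comm I, norm_exp_ofReal_mul_I, mul_one, norm_real, Real.norm_eq_abs]
  exact (abs_rpow_le_abs_rpow ε α).trans_lt (rpow_lt_one (abs_nonneg ε) hε hα)

lemma continuousOn_parametric_intervalIntegral_of_continuousOn {X E : Type*}
    [TopologicalSpace X] [NormedAddCommGroup E] [NormedSpace ℝ E] {f : X → ℝ → E} {s : Set X}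
    (hf : ContinuousOn (Function.uncurry f) (s ×ˢ univ)) (a b : ℝ) :
    ContinuousOn (fun x => ∫ t in a..b, f x t) s := by
  rw [continuousOn_iff_continuous_domRestrict]
  exact intervalIntegral.continuous_parametric_intervalIntegral_of_continuous'
    (f := fun (x : s) t => f x t)
    (hf.comp_continuous (continuous_subtype_val.prodMap continuous_id) fun p => ⟨p.1.2, trivial⟩) a b

theorem small_circle_integral_tendsto_two_pi_general
    (α τ : ℝ) (hα0 : 0 < α) (hτ0 : 0 < τ) (hτ1 : τ < 1)
    (x t : ℝ)
    (h : ℝ → ℝ → ℂ)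
    (hh : ∀ ε φ : ℝ, h ε φ =
      ((1 + (τ : ℂ) * ((ε ^ α : ℝ) : ℂ) * Complex.exp (Complex.I * (α * φ : ℝ))) /
        (1 + ((ε ^ α : ℝ) : ℂ) * Complex.exp (Complex.I * (α * φ : ℝ)))) ^ (1/2 : ℂ)) :
    Tendsto
      (fun ε : ℝ => ∫ φ in (-Real.pi)..Real.pi,
        h ε φ * Complex.exp (-((|x| : ℝ) : ℂ) * (ε : ℂ) * Complex.exp (Complex.I * (φ : ℝ)) * h ε φ
          + (t : ℂ) * (ε : ℂ) * Complex.exp (Complex.I * (φ : ℝ))))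
      (nhdsWithin 0 (Set.Ioi 0)) (nhds ((2 * Real.pi : ℝ) : ℂ)) := by
  have h_cont : ContinuousOn (fun p : ℝ × ℝ => h p.1 p.2) (Ioo (-1) 1 ×ˢ univ) := by
    have h_eq : (fun p : ℝ × ℝ => h p.1 p.2) =
        (fun w : ℂ => ((1 + τ * w) / (1 + w)) ^ (1 / 2 : ℂ)) ∘
          fun p : ℝ × ℝ => ((p.1 ^ α : ℝ) : ℂ) * exp (I * (α * p.2 : ℝ)) := by
      ext p
      simp only [Function.comp_apply, hh, mul_assoc]
    rw [h_eq]
    refine (continuousOn_cpow_half_ratio hτ0.le hτ1.le).comp ?_ fun p hp =>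
      mem_ball_zero_iff.2 <| norm_ofReal_rpow_mul_exp_I_mul_lt_one hα0 (abs_lt.2 hp.1) _
    exact Continuous.continuousOn (by fun_prop (disch := exact hα0.le))
  have h_zero : ∀ φ, h 0 φ = 1 := fun φ => by simp [hh, zero_rpow hα0.ne']
  refine Tendsto.mono_left ?_ nhdsWithin_le_nhds
  convert ((continuousOn_parametric_intervalIntegral_of_continuousOn ?_ (-π) π).continuousAt
    (Ioo_mem_nhds (by norm_num : (-1 : ℝ) < 0) one_pos)).tendsto using 2
  · simp [h_zero, two_mul]
  · simp only [Function.uncurry_def]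
    fun_prop

/-- For `0 < α < 1`, `0 < τ < 1`, `x ∈ ℝ`, `t > 0`, with
`h(ε,φ) = √((1 + τ ε^α e^{iαφ})/(1 + ε^α e^{iαφ}))` (`ε^α` the real power,
`√` the principal complex square root), one has
`∫_{−π}^{π} h(ε,φ)·exp(−|x| ε e^{iφ} h(ε,φ) + t ε e^{iφ}) dφ → 2π` as `ε → 0⁺`. -/
theorem small_circle_integral_tendsto_two_pi
    (α τ : ℝ) (hα0 : 0 < α) (hα1 : α < 1) (hτ0 : 0 < τ) (hτ1 : τ < 1)
    (x t : ℝ) (ht : 0 < t)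
    (h : ℝ → ℝ → ℂ)
    (hh : ∀ ε φ : ℝ, h ε φ =
      ((1 + (τ : ℂ) * ((ε ^ α : ℝ) : ℂ) * Complex.exp (Complex.I * (α * φ : ℝ))) /
        (1 + ((ε ^ α : ℝ) : ℂ) * Complex.exp (Complex.I * (α * φ : ℝ)))) ^ (1/2 : ℂ)) :
    Tendsto
      (fun ε : ℝ => ∫ φ in (-Real.pi)..Real.pi,
        h ε φ * Complex.exp (-((|x| : ℝ) : ℂ) * (ε : ℂ) * Complex.exp (Complex.I * (φ : ℝ)) * h ε φ
          + (t : ℂ) * (ε : ℂ) * Complex.exp (Complex.I * (φ : ℝ))))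
      (nhdsWithin 0 (Set.Ioi 0)) (nhds ((2 * Real.pi : ℝ) : ℂ)) :=
  small_circle_integral_tendsto_two_pi_general α τ hα0 hτ0 hτ1 x t h hh
end

section
/- Let 0 < α < 1 and 0 < τ < 1, let x ∈ ℝ and t > √τ·|x|. For R > 0 and φ ∈ [π/2, π] set h(R, φ) = √( (1 + τ·R^α·e^{iαφ}) / (1 + R^α·e^{iαφ}) ). Then lim_{R → ∞} ∫_{π/2}^{π} |h(R, φ)| · exp( −|x|·R·Re( e^{iφ}·h(R, φ) ) + R·t·cos φ ) dφ = 0. -/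
open Real Complex Filter Bornology Set Topology

/-! With `w = R^α e^{iαφ}`, which lies in the upper half-plane since `0 < αφ < π`, the radicand
`(1 + τw)/(1 + w)` lies in the lower half-plane and tends to `τ` as `‖w‖ = R^α → ∞`. Hence
`Im h ≤ 0` and, for any `B > √τ`, `‖h‖ ≤ B` uniformly in `φ` once `R` is large. For
`φ ∈ [π/2, π]` this gives `Re(e^{iφ} h) ≥ B cos φ`, so the integrand is at most
`B exp((t - B|x|) R cos φ)`; taking `B` with `B|x| < t`, this bound integrates to something
tending to `0` by dominated convergence. -/

namespace Complex

lemma re_exp_I_mul (θ : ℝ) : (exp (I * θ)).re = Real.cos θ := by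
  rw [mul_comm, exp_ofReal_mul_I_re]

lemma im_exp_I_mul (θ : ℝ) : (exp (I * θ)).im = Real.sin θ := by
  rw [mul_comm, exp_ofReal_mul_I_im]

lemma norm_ofReal_mul_exp_I_mul {ρ : ℝ} (hρ : 0 ≤ ρ) (θ : ℝ) : ‖(ρ : ℂ) * exp (I * θ)‖ = ρ := by
  rw [norm_mul, mul_comm I, norm_exp_ofReal_mul_I, norm_real, Real.norm_of_nonneg hρ, mul_one]

lemma im_ofReal_mul_exp_I_mul_pos {ρ θ : ℝ} (hρ : 0 < ρ) (hθ₀ : 0 < θ) (hθπ : θ < π) :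
    0 < ((ρ : ℂ) * exp (I * θ)).im := by
  rw [im_ofReal_mul, im_exp_I_mul]
  exact mul_pos hρ (Real.sin_pos_of_pos_of_lt_pi hθ₀ hθπ)

lemma im_one_add_mul_div_one_add_neg {τ : ℝ} (hτ : τ < 1) {w : ℂ} (hw : 0 < w.im) :
    ((1 + τ * w) / (1 + w)).im < 0 := by
  have hw' : 1 + w ≠ 0 := ne_of_apply_ne im (by simpa using hw.ne')
  have him : ((1 + τ * w) / (1 + w)).im = (τ - 1) * w.im / normSq (1 + w) := by
    simp only [div_im, normSq_apply, mul_im, mul_re, add_re, add_im, one_re, one_im, ofReal_re,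
      ofReal_im]
    ring
  rw [him]
  exact div_neg_of_neg_of_pos (mul_neg_of_neg_of_pos (by linarith) hw) (normSq_pos.2 hw')

lemma im_cpow_ofReal_nonpos {q : ℂ} (hq : q.im < 0) {s : ℝ} (hs₀ : 0 ≤ s) (hs₁ : s ≤ 1) :
    (q ^ (s : ℂ)).im ≤ 0 := by
  rw [cpow_ofReal_im]
  have harg := arg_neg_iff.mpr hq
  refine mul_nonpos_of_nonneg_of_nonpos (by positivity)
    (Real.sin_nonpos_of_nonpos_of_neg_pi_le ?_ ?_)
  · nlinarith
  · nlinarith [neg_pi_lt_arg q]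

lemma tendsto_one_add_mul_div_one_add_cobounded (τ : ℂ) :
    Tendsto (fun w : ℂ => (1 + τ * w) / (1 + w)) (cobounded ℂ) (𝓝 τ) := by
  have hinv : Tendsto (fun w : ℂ => (1 + w)⁻¹) (cobounded ℂ) (𝓝 0) :=
    tendsto_inv₀_cobounded.comp (tendsto_const_add_cobounded 1)
  have hlim : Tendsto (fun w : ℂ => τ + (1 - τ) * (1 + w)⁻¹) (cobounded ℂ) (𝓝 τ) := by
    simpa only [mul_zero, add_zero] using (hinv.const_mul (1 - τ)).const_add τ
  refine hlim.congr' ?_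
  filter_upwards [tendsto_norm_cobounded_atTop.eventually_gt_atTop 1] with w hw
  have hw' : 1 + w ≠ 0 := fun h => by simp [eq_neg_of_add_eq_zero_right h] at hw
  field_simp
  ring

lemma tendsto_norm_sqrt_one_add_mul_div_one_add_cobounded {τ : ℝ} (hτ : 0 < τ) :
    Tendsto (fun w : ℂ => ‖((1 + τ * w) / (1 + w)) ^ (1 / 2 : ℂ)‖) (cobounded ℂ) (𝓝 (√τ)) := by
  have := ((continuousAt_cpow_const (b := 1 / 2) (ofReal_mem_slitPlane.2 hτ)).tendsto.comp
    (tendsto_one_add_mul_div_one_add_cobounded (τ : ℂ))).norm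
  rw [norm_cpow_eq_rpow_re_of_pos hτ] at this
  simpa [Real.sqrt_eq_rpow] using this

lemma exists_norm_sqrt_one_add_mul_div_one_add_le {τ B : ℝ} (hτ : 0 < τ) (hB : √τ < B) :
    ∃ r, ∀ w : ℂ, r ≤ ‖w‖ → ‖((1 + τ * w) / (1 + w)) ^ (1 / 2 : ℂ)‖ ≤ B := by
  have := (tendsto_norm_sqrt_one_add_mul_div_one_add_cobounded hτ).eventually (ge_mem_nhds hB)
  rw [← comap_norm_atTop, eventually_comap, eventually_atTop] at this
  obtain ⟨r, hr⟩ := this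
  exact ⟨r, fun w hw => hr _ hw w rfl⟩

lemma im_sqrt_one_add_mul_div_one_add_nonpos {τ : ℝ} (hτ : τ < 1) {w : ℂ} (hw : 0 < w.im) :
    (((1 + τ * w) / (1 + w)) ^ (1 / 2 : ℂ)).im ≤ 0 := by
  have := im_cpow_ofReal_nonpos (im_one_add_mul_div_one_add_neg hτ hw) (s := 1 / 2)
    (by norm_num) (by norm_num)
  rwa [← ofReal_one, ← ofReal_ofNat, ← ofReal_div]

lemma le_re_exp_I_mul_mul {z : ℂ} {B φ : ℝ} (hzB : ‖z‖ ≤ B) (hz : z.im ≤ 0)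
    (hφ : φ ∈ Icc (π / 2) π) : B * Real.cos φ ≤ (exp (I * φ) * z).re := by
  have hcos : Real.cos φ ≤ 0 :=
    Real.cos_nonpos_of_pi_div_two_le_of_le hφ.1 (by linarith [hφ.2, pi_pos])
  have hsin : 0 ≤ Real.sin φ :=
    Real.sin_nonneg_of_nonneg_of_le_pi (by linarith [hφ.1, pi_pos]) hφ.2
  rw [mul_re, re_exp_I_mul, im_exp_I_mul]
  nlinarith [re_le_norm z]

end Complex

lemma tendsto_integral_exp_mul_cos_atTop :
    Tendsto (fun R : ℝ => ∫ φ in (π / 2)..π, Real.exp (R * Real.cos φ)) atTop (𝓝 0) := by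
  have hπ : π / 2 ≤ π := by linarith [pi_pos]
  rw [← intervalIntegral.integral_zero (a := π / 2) (b := π)]
  refine intervalIntegral.tendsto_integral_filter_of_dominated_convergence (fun _ => 1)
    (.of_forall fun R => by fun_prop) ?_ intervalIntegrable_const ?_
  · filter_upwards [eventually_ge_atTop 0] with R hR
    refine .of_forall fun φ hφ => ?_
    rw [uIoc_of_le hπ] at hφ
    have hcos : Real.cos φ ≤ 0 :=
      Real.cos_nonpos_of_pi_div_two_le_of_le hφ.1.le (by linarith [hφ.2, pi_pos])
    rw [Real.norm_of_nonneg (Real.exp_pos _).le, Real.exp_le_one_iff]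
    exact mul_nonpos_of_nonneg_of_nonpos hR hcos
  · refine .of_forall fun φ hφ => ?_
    rw [uIoc_of_le hπ] at hφ
    have hcos : Real.cos φ < 0 :=
      Real.cos_neg_of_pi_div_two_lt_of_lt hφ.1 (by linarith [hφ.2, pi_pos])
    exact Real.tendsto_exp_atBot.comp (tendsto_id.atTop_mul_const_of_neg hcos)

lemma norm_mul_exp_arc_le {z : ℂ} {a B R t φ : ℝ} (ha : 0 ≤ a) (hR : 0 ≤ R) (hzB : ‖z‖ ≤ B)
    (hz : z.im ≤ 0) (hφ : φ ∈ Icc (π / 2) π) :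
    ‖z‖ * Real.exp (-(a * R * (exp (I * φ) * z).re) + R * t * Real.cos φ) ≤
      B * Real.exp ((t - B * a) * R * Real.cos φ) := by
  have hre := mul_le_mul_of_nonneg_left (le_re_exp_I_mul_mul hzB hz hφ) (mul_nonneg ha hR)
  refine mul_le_mul hzB (Real.exp_le_exp.2 ?_) (Real.exp_pos _).le ((norm_nonneg z).trans hzB)
  linarith

/-- For `0 < α < 1`, `0 < τ < 1`, `x ∈ ℝ` and `t > √τ·|x|`, with
`h(R,φ) = √((1 + τ R^α e^{iαφ})/(1 + R^α e^{iαφ}))` (`R^α` the real power,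
`√` the principal complex square root), the large-arc integral
`∫_{π/2}^{π} |h(R,φ)|·exp(−|x| R Re(e^{iφ} h(R,φ)) + R t cos φ) dφ` tends to
`0` as `R → ∞`. -/
theorem large_arc_integral_tendsto_zero
    (α τ : ℝ) (hα0 : 0 < α) (hα1 : α < 1) (hτ0 : 0 < τ) (hτ1 : τ < 1)
    (x t : ℝ) (ht : Real.sqrt τ * |x| < t)
    (h : ℝ → ℝ → ℂ)
    (hh : ∀ R φ : ℝ, h R φ =
      ((1 + (τ : ℂ) * ((R ^ α : ℝ) : ℂ) * Complex.exp (Complex.I * (α * φ : ℝ))) /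
        (1 + ((R ^ α : ℝ) : ℂ) * Complex.exp (Complex.I * (α * φ : ℝ)))) ^ (1/2 : ℂ)) :
    Tendsto
      (fun R : ℝ => ∫ φ in (Real.pi / 2)..Real.pi,
        ‖h R φ‖ *
          Real.exp (-(|x| * R * (Complex.exp (Complex.I * (φ : ℝ)) * h R φ).re)
            + R * t * Real.cos φ))
      atTop (nhds 0) := by
  obtain ⟨B, hBx, hτB⟩ : ∃ B, B * |x| < t ∧ √τ < B :=
    ((((continuous_mul_const |x|).tendsto √τ).mono_left nhdsWithin_le_nhds).eventually
      (gt_mem_nhds ht)).and (self_mem_nhdsWithin (s := Ioi √τ)) |>.exists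
  obtain ⟨r, hr⟩ := exists_norm_sqrt_one_add_mul_div_one_add_le hτ0 hτB
  have hbound : ∀ᶠ R in atTop, ∀ φ ∈ Icc (π / 2) π,
      ‖h R φ‖ * Real.exp (-(|x| * R * (exp (I * φ) * h R φ).re) + R * t * Real.cos φ) ≤
        B * Real.exp ((t - B * |x|) * R * Real.cos φ) := by
    filter_upwards [eventually_gt_atTop 0, (tendsto_rpow_atTop hα0).eventually_ge_atTop r]
      with R hR hRr φ hφ
    set w : ℂ := (R ^ α : ℝ) * exp (I * (α * φ : ℝ))
    have hhw : h R φ = ((1 + τ * w) / (1 + w)) ^ (1 / 2 : ℂ) := by rw [hh, mul_assoc]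
    have hw : 0 < w.im := im_ofReal_mul_exp_I_mul_pos (rpow_pos_of_pos hR α)
      (mul_pos hα0 (by linarith [pi_pos, hφ.1])) (by nlinarith [pi_pos, hφ.2])
    rw [hhw]
    refine norm_mul_exp_arc_le (abs_nonneg x) hR.le (hr w ?_)
      (im_sqrt_one_add_mul_div_one_add_nonpos hτ1 hw) hφ
    rwa [norm_ofReal_mul_exp_I_mul (rpow_nonneg hR.le α)]
  have hlim : Tendsto (fun R => ∫ φ in (π / 2)..π, B * Real.exp ((t - B * |x|) * R * Real.cos φ))
      atTop (𝓝 0) := by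
    simpa using (tendsto_integral_exp_mul_cos_atTop.comp
      (tendsto_id.const_mul_atTop (sub_pos.2 hBx))).const_mul B
  refine squeeze_zero_norm' ?_ hlim
  filter_upwards [hbound] with R hR
  refine intervalIntegral.norm_integral_le_of_norm_le (by linarith [pi_pos])
    (.of_forall fun φ hφ => ?_) (Continuous.intervalIntegrable (by fun_prop) _ _)
  rw [Real.norm_of_nonneg (by positivity)]
  exact hR φ (Ioc_subset_Icc_self hφ)
end

section
/- Let 0 < α < 1 and 0 < τ < 1, let x ∈ ℝ and t > √τ·|x|. For q > 0 set g₊(q) = √( (1 + τ·q^α·e^{iαπ}) / (1 + q^α·e^{iαπ}) ) and g₋(q) = √( (1 + τ·q^α·e^{−iαπ}) / (1 + q^α·e^{−iαπ}) ). Then the function q ↦ ( g₊(q)·e^{|x|·q·g₊(q)} − g₋(q)·e^{|x|·q·g₋(q)} ) · e^{−qt}/q is (absolutely) integrable on (0, ∞). -/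
/-!
With `z = q^α e^{iαπ}` in the upper half-plane, `g₊(q) = √((1 + τz)/(1 + z))` and the radicand
`τ + (1 - τ)/(1 + z)` lies in the lower half-plane, off the branch cut of `√`; hence `g₋ = conj g₊`
and `g₊` is continuous on `(0, ∞)`. Near `q = 0` the radicand has real part `≥ τ` and imaginary
part `O(q^α)`, so `g₊ - g₋ = O(q^α)`; the mean value theorem for `w ↦ w e^{|x| q w}` makes the
integrand `O(q^{α-1})`. As `q → ∞` the radicand tends to `τ`, so `|g±(q)| → √τ` and, because
`|x|√τ < t`, the integrand decays exponentially.
-/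

open Real Complex MeasureTheory

open Set Filter Topology ComplexConjugate

theorem norm_mul_exp_sub_mul_exp_le (c : ℂ) {M : ℝ} {z w : ℂ} (hz : ‖z‖ ≤ M) (hw : ‖w‖ ≤ M) :
    ‖z * cexp (c * z) - w * cexp (c * w)‖ ≤ (1 + ‖c‖ * M) * Real.exp (‖c‖ * M) * ‖z - w‖ := by
  have hderiv (u : ℂ) :
      HasDerivAt (fun u => u * cexp (c * u)) (cexp (c * u) * (1 + c * u)) u :=
    ((hasDerivAt_id' u).mul ((hasDerivAt_id' u).const_mul c).cexp).congr_deriv (by ring)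
  refine (convex_closedBall (0 : ℂ) M).norm_image_sub_le_of_norm_deriv_le
    (fun u _ => (hderiv u).differentiableAt) (fun u hu => ?_) (by simpa) (by simpa)
  rw [mem_closedBall_zero_iff] at hu
  have hcu : ‖c * u‖ ≤ ‖c‖ * M := by rw [norm_mul]; gcongr
  rw [(hderiv u).deriv, norm_mul, norm_exp, mul_comm]
  gcongr
  · exact add_nonneg zero_le_one (mul_nonneg (norm_nonneg c) ((norm_nonneg z).trans hz))
  · exact (norm_add_le _ _).trans (by simpa using hcu)
  · exact (re_le_norm _).trans hcu

theorem norm_mul_exp_ofReal_mul_le (u : ℂ) {r : ℝ} (hr : 0 ≤ r) :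
    ‖u * cexp ((r : ℂ) * u)‖ ≤ ‖u‖ * Real.exp (r * ‖u‖) := by
  rw [norm_mul, norm_exp, re_ofReal_mul]
  gcongr
  exact re_le_norm u

noncomputable def conjPairIntegrand (g : ℝ → ℂ) (c t q : ℝ) : ℂ :=
  (g q * cexp ((c : ℂ) * (q : ℂ) * g q) - conj (g q) * cexp ((c : ℂ) * (q : ℂ) * conj (g q)))
    * cexp (-(q : ℂ) * (t : ℂ)) / (q : ℂ)

section ConjPairIntegrand

variable {g : ℝ → ℂ} {c t : ℝ}

theorem norm_conjPairIntegrand {q : ℝ} (hq : 0 < q) :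
    ‖conjPairIntegrand g c t q‖ =
      ‖g q * cexp ((c : ℂ) * (q : ℂ) * g q) - conj (g q) * cexp ((c : ℂ) * (q : ℂ) * conj (g q))‖
        * Real.exp (-(q * t)) / q := by
  rw [conjPairIntegrand, norm_div, norm_mul, norm_exp, norm_real, norm_of_nonneg hq.le]
  congr 3
  simp

theorem ContinuousOn.conjPairIntegrand {s : Set ℝ} (hg : ContinuousOn g s) (hs : ∀ q ∈ s, q ≠ 0) :
    ContinuousOn (conjPairIntegrand g c t) s := by
  unfold _root_.conjPairIntegrand
  refine ContinuousOn.div ?_ (by fun_prop) (fun q hq => ofReal_ne_zero.2 (hs q hq))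
  fun_prop

theorem integrableOn_Ioc_conjPairIntegrand {α M C : ℝ} (hg : ContinuousOn g (Ioc 0 1))
    (hc : 0 ≤ c) (hα : 0 < α) (hM : ∀ q ∈ Ioc (0 : ℝ) 1, ‖g q‖ ≤ M)
    (hC : ∀ q ∈ Ioc (0 : ℝ) 1, ‖g q - conj (g q)‖ ≤ C * q ^ α) :
    IntegrableOn (conjPairIntegrand g c t) (Ioc 0 1) := by
  set K := (1 + c * M) * Real.exp (c * M) * C * Real.exp |t|
  have hbound : ∀ q ∈ Ioc (0 : ℝ) 1, ‖conjPairIntegrand g c t q‖ ≤ K * q ^ (α - 1) := by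
    intro q hq
    have hM0 : 0 ≤ M := (norm_nonneg _).trans (hM q hq)
    have hcq : ‖(c : ℂ) * q‖ ≤ c := by
      rw [norm_mul, norm_real, norm_real, norm_of_nonneg hc, norm_of_nonneg hq.1.le]
      exact mul_le_of_le_one_right hc hq.2
    have hnum := norm_mul_exp_sub_mul_exp_le ((c : ℂ) * q) (hM q hq)
      ((norm_conj (g q)).trans_le (hM q hq))
    have hexp : Real.exp (-(q * t)) ≤ Real.exp |t| := by
      gcongr
      nlinarith [neg_abs_le t, le_abs_self t, hq.1, hq.2]
    rw [norm_conjPairIntegrand hq.1]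
    calc _ ≤ (1 + c * M) * Real.exp (c * M) * (C * q ^ α) * Real.exp |t| / q := by
          have hCq : 0 ≤ C * q ^ α := (norm_nonneg _).trans (hC q hq)
          refine div_le_div_of_nonneg_right (mul_le_mul ?_ hexp (Real.exp_pos _).le
            (by positivity)) hq.1.le
          refine hnum.trans ?_
          gcongr
          exact hC q hq
      _ = K * q ^ (α - 1) := by
          rw [rpow_sub_one hq.1.ne']
          ring
  refine Integrable.mono' ?_ ((hg.conjPairIntegrand fun q hq => hq.1.ne').aestronglyMeasurable
    measurableSet_Ioc) (ae_restrict_of_forall_mem measurableSet_Ioc hbound)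
  exact ((intervalIntegrable_iff_integrableOn_Ioc_of_le zero_le_one).mp
    (intervalIntegral.intervalIntegrable_rpow' (by linarith))).const_mul K

theorem integrableOn_Ioi_one_conjPairIntegrand {a M : ℝ} (hg : ContinuousOn g (Ici 1))
    (hc : 0 ≤ c) (hM : ∀ q ∈ Ici (1 : ℝ), ‖g q‖ ≤ M)
    (hlim : Tendsto (fun q => ‖g q‖) atTop (𝓝 a)) (hat : c * a < t) :
    IntegrableOn (conjPairIntegrand g c t) (Ioi 1) := by
  obtain ⟨b, hab, hbt⟩ := exists_between hat
  have hsmall : ∀ᶠ q in atTop, c * ‖g q‖ < b := (hlim.const_mul c).eventually (gt_mem_nhds hab)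
  have hO : conjPairIntegrand g c t =O[atTop] fun q => Real.exp (-(t - b) * q) := by
    refine Asymptotics.IsBigO.of_bound (2 * M) ?_
    filter_upwards [hsmall, eventually_ge_atTop 1] with q hqb hq1
    have hq0 : (0 : ℝ) < q := one_pos.trans_le hq1
    have hM0 : 0 ≤ M := (norm_nonneg _).trans (hM q hq1)
    have hterm : ∀ u : ℂ, ‖u‖ = ‖g q‖ → ‖u * cexp ((c : ℂ) * q * u)‖ ≤ M * Real.exp (b * q) := by
      intro u hu
      rw [← ofReal_mul]
      refine (norm_mul_exp_ofReal_mul_le u (by positivity)).trans ?_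
      rw [hu]
      refine mul_le_mul (hM q hq1) (Real.exp_le_exp.2 ?_) (by positivity) hM0
      nlinarith
    rw [norm_conjPairIntegrand hq0, norm_of_nonneg (Real.exp_pos _).le]
    calc _ ≤ (M * Real.exp (b * q) + M * Real.exp (b * q)) * Real.exp (-(q * t)) := by
          refine div_le_of_le_mul₀ hq0.le (by positivity) ?_
          refine le_mul_of_one_le_right (by positivity) hq1 |>.trans' ?_
          gcongr
          exact (norm_sub_le _ _).trans (add_le_add (hterm _ rfl) (hterm _ (norm_conj _)))
      _ = 2 * M * Real.exp (-(t - b) * q) := by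
          rw [← two_mul, mul_assoc, mul_assoc, mul_assoc, ← Real.exp_add]
          ring_nf
  exact (integrableOn_Ici_iff_integrableOn_Ioi (by finiteness)).mp
    ((hg.conjPairIntegrand fun q hq => (one_pos.trans_le hq).ne').locallyIntegrableOn
      measurableSet_Ici |>.integrableOn_of_isBigO_atTop hO
      ⟨Ioi 0, Ioi_mem_atTop 0, exp_neg_integrableOn_Ioi 0 (sub_pos.2 hbt)⟩)

end ConjPairIntegrand

theorem cpow_one_half_mul_self (w : ℂ) : w ^ (1 / 2 : ℂ) * w ^ (1 / 2 : ℂ) = w := by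
  rw [← sq, one_div]
  exact cpow_ofNat_inv_pow w 2

theorem norm_cpow_one_half (w : ℂ) : ‖w ^ (1 / 2 : ℂ)‖ = √‖w‖ := by
  rw [Real.sqrt_eq_rpow, ← norm_cpow_real]
  norm_num

theorem cpow_one_half_conj {w : ℂ} (hw : w.im ≠ 0) :
    conj w ^ (1 / 2 : ℂ) = conj (w ^ (1 / 2 : ℂ)) := by
  rw [conj_cpow w _ fun h => hw (arg_eq_pi_iff.1 h).2, map_div₀, map_one, map_ofNat]

/-- With `u = √w`: `|Im w| = 2 |Re u| |Im u|` and `(Re u)² ≥ Re w ≥ τ`. -/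
theorem norm_cpow_one_half_sub_conj_le {w : ℂ} {τ : ℝ} (hτ : 0 < τ) (hw : τ ≤ w.re) :
    ‖w ^ (1 / 2 : ℂ) - conj (w ^ (1 / 2 : ℂ))‖ ≤ |w.im| / √τ := by
  set u := w ^ (1 / 2 : ℂ)
  have hsq : u * u = w := cpow_one_half_mul_self w
  have hre : u.re * u.re - u.im * u.im = w.re := by rw [← mul_re, hsq]
  have him : |w.im| = 2 * |u.im| * |u.re| := by
    rw [← hsq, mul_im, mul_comm u.im, ← two_mul, abs_mul, abs_mul, abs_two]; ring
  have hsqrt : √τ ≤ |u.re| := by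
    rw [← Real.sqrt_sq_eq_abs]
    exact Real.sqrt_le_sqrt (by nlinarith [sq_nonneg u.im])
  rw [sub_conj, norm_mul, norm_real, norm_I, mul_one, norm_eq_abs, abs_mul, abs_two, him,
    le_div_iff₀ (Real.sqrt_pos.2 hτ)]
  gcongr

/-- `g₊(q) = zenerRoot τ (q^α e^{iαπ})` and `g₋(q) = zenerRoot τ (q^α e^{-iαπ})`. -/
noncomputable def zenerRoot (τ : ℝ) (z : ℂ) : ℂ := ((1 + τ * z) / (1 + z)) ^ (1 / 2 : ℂ)

section ZenerRoot

variable {τ : ℝ} {z : ℂ}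

theorem one_add_ne_zero_of_im_ne_zero (hz : z.im ≠ 0) : 1 + z ≠ 0 := fun h =>
  hz (by simpa using congrArg im h)

theorem one_add_mul_div_one_add (τ : ℝ) (hz : 1 + z ≠ 0) :
    (1 + τ * z) / (1 + z) = τ + (1 - τ) * (1 + z)⁻¹ := by
  field_simp
  ring

theorem im_one_add_mul_div_one_add (τ : ℝ) (hz : 1 + z ≠ 0) :
    ((1 + τ * z) / (1 + z)).im = -((1 - τ) * z.im) / normSq (1 + z) := by
  rw [one_add_mul_div_one_add τ hz]
  simp [inv_im, neg_div, mul_div_assoc]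

theorem re_one_add_mul_div_one_add (τ : ℝ) (hz : 1 + z ≠ 0) :
    ((1 + τ * z) / (1 + z)).re = τ + (1 - τ) * (1 + z.re) / normSq (1 + z) := by
  rw [one_add_mul_div_one_add τ hz]
  simp [inv_re, mul_div_assoc]

theorem im_one_add_mul_div_one_add_ne_zero (hτ : τ ≠ 1) (hz : z.im ≠ 0) :
    ((1 + τ * z) / (1 + z)).im ≠ 0 := by
  have hz1 := one_add_ne_zero_of_im_ne_zero hz
  rw [im_one_add_mul_div_one_add τ hz1]
  exact div_ne_zero (neg_ne_zero.2 (mul_ne_zero (sub_ne_zero.2 hτ.symm) hz))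
    (normSq_pos.2 hz1).ne'

theorem norm_one_add_mul_div_one_add_sub (hτ : τ ≤ 1) (hz : 1 + z ≠ 0) :
    ‖(1 + τ * z) / (1 + z) - τ‖ = (1 - τ) / ‖1 + z‖ := by
  rw [one_add_mul_div_one_add τ hz, add_sub_cancel_left, norm_mul, norm_inv, ← ofReal_one,
    ← ofReal_sub, norm_real, norm_of_nonneg (sub_nonneg.2 hτ), div_eq_mul_inv]

theorem norm_one_add_mul_div_one_add_le (hτ0 : 0 ≤ τ) (hτ1 : τ ≤ 1) (hz : 1 + z ≠ 0) :
    ‖(1 + τ * z) / (1 + z)‖ ≤ τ + (1 - τ) / ‖1 + z‖ := by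
  rw [← norm_one_add_mul_div_one_add_sub hτ1 hz]
  simpa [abs_of_nonneg hτ0] using norm_le_norm_add_norm_sub' ((1 + τ * z) / (1 + z)) (τ : ℂ)

theorem zenerRoot_conj (hτ : τ ≠ 1) (hz : z.im ≠ 0) :
    zenerRoot τ (conj z) = conj (zenerRoot τ z) := by
  rw [zenerRoot, zenerRoot, ← cpow_one_half_conj (im_one_add_mul_div_one_add_ne_zero hτ hz)]
  simp

theorem continuousAt_zenerRoot (hτ : τ ≠ 1) (hz : z.im ≠ 0) : ContinuousAt (zenerRoot τ) z := by
  have hW : ContinuousAt (fun z : ℂ => (1 + τ * z) / (1 + z)) z :=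
    (continuousAt_const.add (continuousAt_const.mul continuousAt_id)).div
      (continuousAt_const.add continuousAt_id) (one_add_ne_zero_of_im_ne_zero hz)
  exact ContinuousAt.comp (g := fun w : ℂ => w ^ (1 / 2 : ℂ)) (continuousAt_cpow_const
    (mem_slitPlane_iff.2 (Or.inr (im_one_add_mul_div_one_add_ne_zero hτ hz)))) hW

theorem norm_zenerRoot_le (hτ0 : 0 ≤ τ) (hτ1 : τ ≤ 1) (hz : 1 + z ≠ 0) :
    ‖zenerRoot τ z‖ ≤ √(τ + (1 - τ) / ‖1 + z‖) := by
  rw [zenerRoot, norm_cpow_one_half]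
  exact Real.sqrt_le_sqrt (norm_one_add_mul_div_one_add_le hτ0 hτ1 hz)

theorem norm_zenerRoot_sub_conj_le (hτ0 : 0 < τ) (hτ1 : τ ≤ 1) (hz : 1 + z ≠ 0)
    (hre : -1 ≤ z.re) :
    ‖zenerRoot τ z - conj (zenerRoot τ z)‖ ≤ (1 - τ) * |z.im| / (normSq (1 + z) * √τ) := by
  have hW : τ ≤ ((1 + τ * z) / (1 + z)).re := by
    rw [re_one_add_mul_div_one_add τ hz, le_add_iff_nonneg_right]
    exact div_nonneg (mul_nonneg (by linarith) (by linarith)) (normSq_nonneg _)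
  refine (norm_cpow_one_half_sub_conj_le hτ0 hW).trans_eq ?_
  rw [im_one_add_mul_div_one_add τ hz, abs_div, abs_neg, abs_mul, abs_of_nonneg (sub_nonneg.2 hτ1),
    abs_of_nonneg (normSq_nonneg _), div_div]

end ZenerRoot

section Ray

variable {τ : ℝ} {E : ℂ}

theorem abs_im_le_norm_one_add_ofReal_mul (r : ℝ) (hE : ‖E‖ = 1) : |E.im| ≤ ‖1 + r * E‖ := by
  have h : 1 + r * E = E * (conj E + r) := by
    rw [mul_add, mul_conj, normSq_eq_norm_sq, hE]
    push_cast
    ring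
  rw [h, norm_mul, hE, one_mul]
  simpa using abs_im_le_norm (conj E + r)

theorem mul_im_le_norm_one_add_ofReal_mul (r : ℝ) : r * E.im ≤ ‖1 + r * E‖ := by
  simpa using im_le_norm (1 + r * E)

theorem norm_zenerRoot_ofReal_mul_le (hτ0 : 0 ≤ τ) (hτ1 : τ ≤ 1) (hE : ‖E‖ = 1)
    (hEim : 0 < E.im) (r : ℝ) : ‖zenerRoot τ (r * E)‖ ≤ √(τ + (1 - τ) / E.im) := by
  have hD : E.im ≤ ‖1 + r * E‖ := (le_abs_self _).trans (abs_im_le_norm_one_add_ofReal_mul r hE)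
  refine (norm_zenerRoot_le hτ0 hτ1 (norm_pos_iff.1 (hEim.trans_le hD))).trans ?_
  gcongr

theorem norm_zenerRoot_ofReal_mul_sub_conj_le (hτ0 : 0 < τ) (hτ1 : τ ≤ 1) (hE : ‖E‖ = 1)
    (hEim : 0 < E.im) {r : ℝ} (hr0 : 0 ≤ r) (hr1 : r ≤ 1) :
    ‖zenerRoot τ (r * E) - conj (zenerRoot τ (r * E))‖ ≤ (1 - τ) / (E.im * √τ) * r := by
  have hD : E.im ≤ ‖1 + r * E‖ := (le_abs_self _).trans (abs_im_le_norm_one_add_ofReal_mul r hE)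
  have hre : -1 ≤ (r * E).re := by
    have := (abs_le.1 ((abs_re_le_norm E).trans hE.le)).1
    rw [re_ofReal_mul]
    nlinarith
  refine (norm_zenerRoot_sub_conj_le hτ0 hτ1 (norm_pos_iff.1 (hEim.trans_le hD)) hre).trans ?_
  rw [im_ofReal_mul, abs_of_nonneg (mul_nonneg hr0 hEim.le), normSq_eq_norm_sq]
  calc (1 - τ) * (r * E.im) / (‖1 + r * E‖ ^ 2 * √τ)
      ≤ (1 - τ) * (r * E.im) / (E.im ^ 2 * √τ) := by
        gcongr
    _ = (1 - τ) / (E.im * √τ) * r := by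
        field_simp

theorem tendsto_norm_zenerRoot_ofReal_mul (hτ0 : 0 ≤ τ) (hτ1 : τ ≤ 1) (hEim : 0 < E.im) :
    Tendsto (fun r : ℝ => ‖zenerRoot τ (r * E)‖) atTop (𝓝 √τ) := by
  have hW : Tendsto (fun r : ℝ => (1 + τ * (r * E)) / (1 + r * E)) atTop (𝓝 (τ : ℂ)) := by
    rw [tendsto_iff_norm_sub_tendsto_zero]
    refine squeeze_zero' (g := fun r => (1 - τ) / (r * E.im))
      (Eventually.of_forall fun r => norm_nonneg _) ?_
      (tendsto_const_nhds.div_atTop (tendsto_id.atTop_mul_const hEim))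
    filter_upwards [eventually_gt_atTop 0] with r hr
    have hD := mul_im_le_norm_one_add_ofReal_mul (E := E) r
    rw [norm_one_add_mul_div_one_add_sub hτ1 (norm_pos_iff.1 ((mul_pos hr hEim).trans_le hD))]
    gcongr
  have := (continuous_sqrt.tendsto _).comp ((continuous_norm.tendsto _).comp hW)
  simpa only [Function.comp_def, zenerRoot, norm_cpow_one_half, norm_real,
    norm_of_nonneg hτ0] using this

theorem zenerRoot_ofReal_mul_conj (hτ : τ ≠ 1) (hEim : 0 < E.im) {r : ℝ} (hr : 0 < r) :
    zenerRoot τ (r * conj E) = conj (zenerRoot τ (r * E)) := by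
  rw [← zenerRoot_conj hτ (by rw [im_ofReal_mul]; exact (mul_pos hr hEim).ne'), map_mul,
    conj_ofReal]

theorem continuousOn_zenerRoot_rpow_mul (hτ : τ ≠ 1) (hEim : 0 < E.im) (α : ℝ) :
    ContinuousOn (fun q : ℝ => zenerRoot τ ((q ^ α : ℝ) * E)) (Ioi 0) := by
  intro q hq
  have hz : (((q ^ α : ℝ) : ℂ) * E).im ≠ 0 := by
    rw [im_ofReal_mul]
    exact (mul_pos (rpow_pos_of_pos hq α) hEim).ne'
  have hz_cont : ContinuousAt (fun q : ℝ => ((q ^ α : ℝ) : ℂ) * E) q :=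
    (continuous_ofReal.continuousAt.comp (Real.continuousAt_rpow_const q α (Or.inl hq.ne'))).mul
      continuousAt_const
  exact (ContinuousAt.comp (g := zenerRoot τ) (f := fun q : ℝ => ((q ^ α : ℝ) : ℂ) * E) (x := q)
    (continuousAt_zenerRoot hτ hz) hz_cont).continuousWithinAt

end Ray

theorem integrableOn_conjPairIntegrand_zenerRoot {α τ c t : ℝ} {E : ℂ} (hα : 0 < α)
    (hτ0 : 0 < τ) (hτ1 : τ < 1) (hE : ‖E‖ = 1) (hEim : 0 < E.im) (hc : 0 ≤ c)
    (hct : c * √τ < t) :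
    IntegrableOn (conjPairIntegrand (fun q => zenerRoot τ ((q ^ α : ℝ) * E)) c t) (Ioi 0) := by
  have hcont := continuousOn_zenerRoot_rpow_mul hτ1.ne hEim α
  have hM (q : ℝ) := norm_zenerRoot_ofReal_mul_le hτ0.le hτ1.le hE hEim (q ^ α)
  have hC (q : ℝ) (hq : q ∈ Ioc (0 : ℝ) 1) :=
    norm_zenerRoot_ofReal_mul_sub_conj_le hτ0 hτ1.le hE hEim (rpow_nonneg hq.1.le α)
      (rpow_le_one hq.1.le hq.2 hα.le)
  rw [← Ioc_union_Ioi_eq_Ioi zero_le_one]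
  exact (integrableOn_Ioc_conjPairIntegrand (hcont.mono Ioc_subset_Ioi_self) hc hα
    (fun q _ => hM q) hC).union (integrableOn_Ioi_one_conjPairIntegrand
      (hcont.mono (Ici_subset_Ioi.2 one_pos)) hc (fun q _ => hM q)
      ((tendsto_norm_zenerRoot_ofReal_mul hτ0.le hτ1.le hEim).comp (tendsto_rpow_atTop hα)) hct)

/-- For `0 < α < 1`, `0 < τ < 1`, `x ∈ ℝ` and `t > √τ·|x|`, with
`g₊(q) = √((1 + τ q^α e^{iαπ})/(1 + q^α e^{iαπ}))` and
`g₋(q) = √((1 + τ q^α e^{−iαπ})/(1 + q^α e^{−iαπ}))` (`q^α` the real power,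
`√` the principal complex square root), the integrand of the fundamental
solution formula, `q ↦ (g₊(q)·e^{|x| q g₊(q)} − g₋(q)·e^{|x| q g₋(q)})·e^{−qt}/q`,
is integrable on `(0, ∞)`. -/
theorem fund_sol_integrand_integrable
    (α τ : ℝ) (hα0 : 0 < α) (hα1 : α < 1) (hτ0 : 0 < τ) (hτ1 : τ < 1)
    (x t : ℝ) (ht : Real.sqrt τ * |x| < t)
    (gp gm : ℝ → ℂ)
    (hgp : ∀ q : ℝ, gp q =
      ((1 + (τ : ℂ) * ((q ^ α : ℝ) : ℂ) * Complex.exp (Complex.I * (α * Real.pi : ℝ))) /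
        (1 + ((q ^ α : ℝ) : ℂ) * Complex.exp (Complex.I * (α * Real.pi : ℝ)))) ^ (1/2 : ℂ))
    (hgm : ∀ q : ℝ, gm q =
      ((1 + (τ : ℂ) * ((q ^ α : ℝ) : ℂ) * Complex.exp (-(Complex.I * (α * Real.pi : ℝ)))) /
        (1 + ((q ^ α : ℝ) : ℂ) * Complex.exp (-(Complex.I * (α * Real.pi : ℝ))))) ^ (1/2 : ℂ)) :
    IntegrableOn
      (fun q : ℝ =>
        (gp q * Complex.exp (((|x| : ℝ) : ℂ) * (q : ℂ) * gp q)
          - gm q * Complex.exp (((|x| : ℝ) : ℂ) * (q : ℂ) * gm q))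
          * Complex.exp (-(q : ℂ) * (t : ℂ)) / (q : ℂ))
      (Set.Ioi 0) := by
  have hE : ‖cexp (I * (α * π : ℝ))‖ = 1 := by rw [mul_comm, norm_exp_ofReal_mul_I]
  have hEim : 0 < (cexp (I * (α * π : ℝ))).im := by
    rw [mul_comm, exp_ofReal_mul_I_im]
    exact sin_pos_of_pos_of_lt_pi (by positivity) (by nlinarith [pi_pos])
  set E := cexp (I * (α * π : ℝ))
  obtain rfl : gp = fun q => zenerRoot τ ((q ^ α : ℝ) * E) :=
    funext fun q => by rw [hgp, zenerRoot, mul_assoc]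
  refine (integrableOn_conjPairIntegrand_zenerRoot hα0 hτ0 hτ1 hE hEim (abs_nonneg x)
    (by rwa [mul_comm])).congr_fun (fun q hq => ?_) measurableSet_Ioi
  have hgm_conj : gm q = conj (zenerRoot τ ((q ^ α : ℝ) * E)) := by
    rw [hgm, ← zenerRoot_ofReal_mul_conj hτ1.ne hEim (rpow_pos_of_pos hq α), zenerRoot,
      ← exp_conj, map_mul, conj_I, conj_ofReal, neg_mul, mul_assoc]
  simp only [conjPairIntegrand, hgm_conj]
end
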